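/- arXiv:1203.2939 — 3 statements merged into one kernel-verified Lean document; each statement's English description precedes it below -/
import Mathlib

section
/- Let i > 0 and let Z = (z_1, …, z_n) with 0 < z_1 < z_2 < … < z_n. If two Gauss diagrams G and G' are related by a single chord move, a two chord move, or a triangle move (and hence if they are related by any finite sequence of chord moves), then |V_i(G)| = |V_i(G')| and |V_Z(G)| = |V_Z(G')|. -/
/-! ## Gauss diagrams and parity -/

/-- `arc a b p` : position `p` lies strictly inside the arc traversed in the positive
direction from `a` to `b` on a circle whose positions are numbered `0, 1, 2, …`
in the positive direction. -/
def arc (a b p : ℕ) : Bool :=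
  if a < b then decide (a < p ∧ p < b) else decide (p < b ∨ a < p)

/-- A Gauss diagram: `n` signed oriented chords whose `2n` endpoints are placed on the
`2n` points of an oriented circle.  Chord `i` has its head (arrowhead) at position
`head i`, its foot at position `foot i`, and sign `sign i`. -/
structure GaussDiagram where
  n : ℕ
  head : Fin n → Fin (2 * n)
  foot : Fin n → Fin (2 * n)
  sign : Fin n → ℤ

namespace GaussDiagram

/-- A genuine Gauss diagram: all `2n` endpoints are distinct (hence they exhaust the
`2n` circle positions) and every sign is `±1`. -/
def Proper (G : GaussDiagram) : Prop :=
  Function.Injective (Sum.elim G.head G.foot) ∧ ∀ i, G.sign i = 1 ∨ G.sign i = -1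

/-- `G.crosses c x` : chord `x` intersects chord `c` (their endpoint pairs interleave
in the cyclic order), i.e. `x ∈ N_c`. -/
def crosses (G : GaussDiagram) (c x : Fin G.n) : Bool :=
  x != c &&
    (arc (G.head c).1 (G.foot c).1 (G.head x).1 != arc (G.head c).1 (G.foot c).1 (G.foot x).1)

/-- The intersection number `int_c(x)`: `+1` if the head of `x` lies on the arc traversed
in the positive direction from the head of `c` to the foot of `c`, and `-1` otherwise. -/
def inter (G : GaussDiagram) (c x : Fin G.n) : ℤ :=
  if arc (G.head c).1 (G.foot c).1 (G.head x).1 then 1 else -1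

/-- The parity of a chord: `p(c) = ∑_{x ∈ N_c} sgn(x) · int_c(x)`. -/
def parity (G : GaussDiagram) (c : Fin G.n) : ℤ :=
  ∑ x : Fin G.n, if G.crosses c x then G.sign x * G.inter c x else 0

end GaussDiagram

/-- The cyclic successor of a circle position. -/
def psucc {m : ℕ} (v : Fin m) : Fin m := ⟨(v.1 + 1) % m, Nat.mod_lt _ v.pos⟩

/-- Two circle positions are adjacent. -/
def adjPos {m : ℕ} (u v : Fin m) : Prop := v = psucc u ∨ u = psucc v

/-- A map of circle positions preserving the cyclic order (in particular injective). -/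
def CyclicMap {k l : ℕ} (φ : Fin k → Fin l) : Prop :=
  ∀ a b p : Fin k, arc a.1 b.1 p.1 = arc (φ a).1 (φ b).1 (φ p).1

/-- A map of circle positions reversing the cyclic order. -/
def AntiCyclicMap {k l : ℕ} (φ : Fin k → Fin l) : Prop :=
  ∀ a b p : Fin k, arc a.1 b.1 p.1 = arc (φ b).1 (φ a).1 (φ p).1

/-! ## The chord moves -/

/-- The single chord move: `G'` is obtained from `G` by inserting one chord `y` whose two
endpoints occupy adjacent positions on the circle; all old chords keep their mutual cyclic
position (via the cyclic-order preserving map `φ`), their orientation and their sign. -/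
def SingleChordMove (G G' : GaussDiagram) : Prop :=
  G.Proper ∧ G'.Proper ∧ G'.n = G.n + 1 ∧
  ∃ (e : Fin G.n → Fin G'.n) (φ : Fin (2 * G.n) → Fin (2 * G'.n)) (y : Fin G'.n),
    Function.Injective e ∧ (∀ i, e i ≠ y) ∧ CyclicMap φ ∧
    (∀ i, G'.head (e i) = φ (G.head i) ∧ G'.foot (e i) = φ (G.foot i) ∧
      G'.sign (e i) = G.sign i) ∧
    adjPos (G'.head y) (G'.foot y)

/-- The two chord move: `G'` is obtained from `G` by inserting a pair of oppositely signed
chords `y₁, y₂` whose heads occupy adjacent positions and whose feet occupy adjacent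
positions on the circle. -/
def TwoChordMove (G G' : GaussDiagram) : Prop :=
  G.Proper ∧ G'.Proper ∧ G'.n = G.n + 2 ∧
  ∃ (e : Fin G.n → Fin G'.n) (φ : Fin (2 * G.n) → Fin (2 * G'.n)) (y₁ y₂ : Fin G'.n),
    Function.Injective e ∧ y₁ ≠ y₂ ∧ (∀ i, e i ≠ y₁ ∧ e i ≠ y₂) ∧ CyclicMap φ ∧
    (∀ i, G'.head (e i) = φ (G.head i) ∧ G'.foot (e i) = φ (G.foot i) ∧
      G'.sign (e i) = G.sign i) ∧
    adjPos (G'.head y₁) (G'.head y₂) ∧ adjPos (G'.foot y₁) (G'.foot y₂) ∧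
    G'.sign y₁ = -G'.sign y₂

/-- The triangle (vertex) structure of three chords `x y z` of `G`: their six endpoints
form three pairs of adjacent circle positions (the vertices of a triangle), namely
`{w₁, w₁+1}` (two heads), `{w₂, w₂+1}` (two feet) and `{w₃, w₃+1}` (a head and a foot).
Chord `x` runs from the head–head vertex to the foot–foot vertex. -/
def TriangleVertices (G : GaussDiagram) (x y z : Fin G.n) (w₁ w₂ w₃ : Fin (2 * G.n)) : Prop :=
  x ≠ y ∧ y ≠ z ∧ x ≠ z ∧
  ((G.head x = w₁ ∧ G.head y = psucc w₁) ∨ (G.head x = psucc w₁ ∧ G.head y = w₁)) ∧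
  ((G.foot x = w₂ ∧ G.foot z = psucc w₂) ∨ (G.foot x = psucc w₂ ∧ G.foot z = w₂)) ∧
  ((G.foot y = w₃ ∧ G.head z = psucc w₃) ∨ (G.foot y = psucc w₃ ∧ G.head z = w₃))

/-- The admissible sign configurations for a triangle move on the chords `x y z`
(`x` being the chord joining the head–head vertex to the foot–foot vertex):
these are the configurations exhibited in the paper together with their modifications
obtained by simultaneously reversing the sign and orientation of the two chords meeting
at the head–head vertex or at the foot–foot vertex.
In the (3,0) case the two chords `y, z` carry one sign and `x` the opposite sign; in the
(2,1) case the signs are governed by the pair of chords crossing on the one-intersection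
side of the move. -/
def AdmissibleSigns (G G' : GaussDiagram) (x y z : Fin G.n) (x' y' z' : Fin G'.n) : Prop :=
  -- (3,0) triangle move
  (((G.crosses x y = false ∧ G.crosses y z = false ∧ G.crosses x z = false) ∨
    (G'.crosses x' y' = false ∧ G'.crosses y' z' = false ∧ G'.crosses x' z' = false)) ∧
    G.sign y = G.sign z ∧ G.sign x = -G.sign y) ∨
  -- (2,1) triangle move, the single intersection being between x and y
  (((G.crosses x y = true ∧ G.crosses y z = false ∧ G.crosses x z = false) ∨
    (G'.crosses x' y' = true ∧ G'.crosses y' z' = false ∧ G'.crosses x' z' = false)) ∧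
    G.sign y = -G.sign x ∧ G.sign z = G.sign x) ∨
  -- (2,1) triangle move, the single intersection being between x and z
  (((G.crosses x z = true ∧ G.crosses x y = false ∧ G.crosses y z = false) ∨
    (G'.crosses x' z' = true ∧ G'.crosses x' y' = false ∧ G'.crosses y' z' = false)) ∧
    G.sign z = -G.sign x ∧ G.sign y = G.sign x) ∨
  -- (2,1) triangle move, the single intersection being between y and z
  (((G.crosses y z = true ∧ G.crosses x y = false ∧ G.crosses x z = false) ∨
    (G'.crosses y' z' = true ∧ G'.crosses x' y' = false ∧ G'.crosses x' z' = false)) ∧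
    G.sign y = G.sign x ∧ G.sign z = G.sign x)

/-- The triangle move: three chords `x y z` of `G` forming a triangle with three
adjacent-position vertices (one head–head, one foot–foot, one mixed), in an admissible
sign/orientation configuration, slide past each other: in `G'` each pair of adjacent
endpoints has been interchanged, while everything else is unchanged. -/
def TriangleMove (G G' : GaussDiagram) : Prop :=
  G.Proper ∧ G'.Proper ∧
  ∃ (e : Fin G.n → Fin G'.n) (φ : Fin (2 * G.n) → Fin (2 * G'.n))
    (x y z : Fin G.n) (w₁ w₂ w₃ : Fin (2 * G.n)),
    Function.Bijective e ∧ Function.Bijective φ ∧ CyclicMap φ ∧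
    TriangleVertices G x y z w₁ w₂ w₃ ∧
    (∀ i, G'.sign (e i) = G.sign i) ∧
    (∀ i, i ≠ x → i ≠ y → i ≠ z →
      G'.head (e i) = φ (G.head i) ∧ G'.foot (e i) = φ (G.foot i)) ∧
    -- sliding: each of the six endpoints is exchanged with its partner in its vertex pair
    ((G'.head (e x) = φ (G.head y) ∧ G'.head (e y) = φ (G.head x)) ∧
     (G'.foot (e x) = φ (G.foot z) ∧ G'.foot (e z) = φ (G.foot x)) ∧
     (G'.foot (e y) = φ (G.head z) ∧ G'.head (e z) = φ (G.foot y))) ∧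
    AdmissibleSigns G G' x y z (e x) (e y) (e z)

/-- One chord move (in either direction) between Gauss diagrams. -/
def GaussMove (G G' : GaussDiagram) : Prop :=
  SingleChordMove G G' ∨ SingleChordMove G' G ∨
  TwoChordMove G G' ∨ TwoChordMove G' G ∨
  TriangleMove G G' ∨ TriangleMove G' G

/-! ## Invariants from parity -/

namespace GaussDiagram

/-- `|A_i(G)|`: the signed cardinality of the set of chords of parity `i`. -/
def cardA (G : GaussDiagram) (i : ℤ) : ℤ :=
  ∑ c : Fin G.n, if G.parity c = i then G.sign c else 0

/-- `|A_Z(G)|`: the signed cardinality of the set of tuples of chords with parities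
prescribed by `Z`. -/
def cardATuple (G : GaussDiagram) {k : ℕ} (Z : Fin k → ℤ) : ℤ :=
  ∑ t : Fin k → Fin G.n,
    if ∀ j, G.parity (t j) = Z j then ∏ j, G.sign (t j) else 0

/-- `|V_i(G)|`: the signed cardinality of the set of chords whose parity has absolute
value `i`. -/
def cardV (G : GaussDiagram) (i : ℤ) : ℤ :=
  ∑ c : Fin G.n, if |G.parity c| = i then G.sign c else 0

/-- `|V_Z(G)|`: the signed cardinality of the set of tuples of chords whose parities have
absolute values prescribed by `Z`. -/
def cardVTuple (G : GaussDiagram) {k : ℕ} (Z : Fin k → ℤ) : ℤ :=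
  ∑ t : Fin k → Fin G.n,
    if ∀ j, |G.parity (t j)| = Z j then ∏ j, G.sign (t j) else 0

/-- Flip (reverse the orientation of and negate the sign of) every chord in `S`;
this corresponds to crossing changes in the corresponding virtual knot diagram. -/
def flipSet (G : GaussDiagram) (S : Finset (Fin G.n)) : GaussDiagram where
  n := G.n
  head := fun i => if i ∈ S then G.foot i else G.head i
  foot := fun i => if i ∈ S then G.head i else G.foot i
  sign := fun i => if i ∈ S then -G.sign i else G.sign i

end GaussDiagram

/-! ## Smoothing and flat diagrams -/

/-- The chord of the smaller diagram indexed by `i` corresponds to the chord `skipAt x i`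
of the original diagram (skipping the smoothed chord `x`). -/
def skipAt {n : ℕ} (x : Fin n) (i : Fin (n - 1)) : Fin n :=
  if h : i.1 < x.1 then ⟨i.1, lt_trans h x.2⟩ else ⟨i.1 + 1, by have := i.2; omega⟩

/-- Relabelling of the circle positions after vertically smoothing the chord with head at
position `h` and foot at position `f` (on a circle with `m` positions): the two positions
`h` and `f` are deleted and the arc strictly between `h` and `f` is reversed. -/
def smoothPos (m h f p : ℕ) : ℕ :=
  let d := (f + m - (h + 1)) % m
  let r := (p + m - (h + 1)) % m
  if r < d then d - 1 - r else r - 1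

/-- Vertical smoothing of the chord `x` of a Gauss diagram: the chord `x` is deleted and
the cyclic order of the arc of endpoints lying strictly between the two endpoints of `x`
is reversed. -/
def GaussDiagram.smooth (G : GaussDiagram) (x : Fin G.n) : GaussDiagram where
  n := G.n - 1
  head := fun i =>
    ⟨smoothPos (2 * G.n) (G.head x).1 (G.foot x).1 (G.head (skipAt x i)).1 % (2 * (G.n - 1)),
      Nat.mod_lt _ (by have := i.2; omega)⟩
  foot := fun i =>
    ⟨smoothPos (2 * G.n) (G.head x).1 (G.foot x).1 (G.foot (skipAt x i)).1 % (2 * (G.n - 1)),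
      Nat.mod_lt _ (by have := i.2; omega)⟩
  sign := fun i => G.sign (skipAt x i)

/-- The index of chord `i ≠ x` in the diagram obtained by smoothing the chord `x`. -/
def unskip? {n : ℕ} (x i : Fin n) : Option (Fin (n - 1)) :=
  if h : i.1 < x.1 then some ⟨i.1, by have := x.2; omega⟩
  else if h' : x.1 < i.1 then some ⟨i.1 - 1, by have := i.2; omega⟩
  else none

/-- Smoothing a list of chords, one after the other. -/
def GaussDiagram.smoothList : (G : GaussDiagram) → List (Fin G.n) → GaussDiagram
  | G, [] => G
  | G, x :: xs => (G.smooth x).smoothList (xs.filterMap (unskip? x))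
termination_by G l => l.length
decreasing_by simpa using Nat.lt_succ_of_le (List.length_filterMap_le _ _)

/-- A flat Gauss diagram: a chord diagram on the circle with no signs and no head/foot
designations. -/
structure FlatDiagram where
  n : ℕ
  fst : Fin n → Fin (2 * n)
  snd : Fin n → Fin (2 * n)

namespace FlatDiagram

/-- A genuine flat diagram: the `2n` endpoints are distinct. -/
def Proper (F : FlatDiagram) : Prop := Function.Injective (Sum.elim F.fst F.snd)

/-- The (unordered) endpoints of the chord `y` are `u` and `v`. -/
def hasEnds (F : FlatDiagram) (y : Fin F.n) (u v : Fin (2 * F.n)) : Prop :=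
  (F.fst y = u ∧ F.snd y = v) ∨ (F.fst y = v ∧ F.snd y = u)

end FlatDiagram

/-- Forgetting all signs and head/foot designations of a Gauss diagram. -/
def GaussDiagram.flatten (G : GaussDiagram) : FlatDiagram := ⟨G.n, G.head, G.foot⟩

/-- Isomorphism of flat diagrams: a bijection of chords induced by a bijection of the
circle preserving (or reversing) the cyclic order. -/
def FlatIso (F F' : FlatDiagram) : Prop :=
  ∃ (e : Fin F.n → Fin F'.n) (φ : Fin (2 * F.n) → Fin (2 * F'.n)),
    Function.Bijective e ∧ Function.Bijective φ ∧ (CyclicMap φ ∨ AntiCyclicMap φ) ∧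
    ∀ i, F'.hasEnds (e i) (φ (F.fst i)) (φ (F.snd i))

/-- Flat single chord move: insertion of a chord with adjacent endpoints. -/
def FlatSingleMove (F F' : FlatDiagram) : Prop :=
  F.Proper ∧ F'.Proper ∧ F'.n = F.n + 1 ∧
  ∃ (e : Fin F.n → Fin F'.n) (φ : Fin (2 * F.n) → Fin (2 * F'.n)) (y : Fin F'.n),
    Function.Injective e ∧ (∀ i, e i ≠ y) ∧ CyclicMap φ ∧
    (∀ i, F'.hasEnds (e i) (φ (F.fst i)) (φ (F.snd i))) ∧
    adjPos (F'.fst y) (F'.snd y)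

/-- Flat two chord move: insertion of a parallel pair of chords with pairwise adjacent
endpoints. -/
def FlatTwoMove (F F' : FlatDiagram) : Prop :=
  F.Proper ∧ F'.Proper ∧ F'.n = F.n + 2 ∧
  ∃ (e : Fin F.n → Fin F'.n) (φ : Fin (2 * F.n) → Fin (2 * F'.n)) (y₁ y₂ : Fin F'.n)
    (p q : Fin (2 * F'.n)),
    Function.Injective e ∧ y₁ ≠ y₂ ∧ (∀ i, e i ≠ y₁ ∧ e i ≠ y₂) ∧ CyclicMap φ ∧
    (∀ i, F'.hasEnds (e i) (φ (F.fst i)) (φ (F.snd i))) ∧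
    F'.hasEnds y₁ p q ∧ F'.hasEnds y₂ (psucc p) (psucc q)

/-- Flat triangle move: three chords whose six endpoints form three adjacent-position
vertex pairs slide past each other (no sign or orientation conditions). -/
def FlatTriangleMove (F F' : FlatDiagram) : Prop :=
  F.Proper ∧ F'.Proper ∧
  ∃ (e : Fin F.n → Fin F'.n) (φ : Fin (2 * F.n) → Fin (2 * F'.n))
    (x y z : Fin F.n) (w₁ w₂ w₃ α₁ β₁ α₂ β₂ α₃ β₃ : Fin (2 * F.n)),
    Function.Bijective e ∧ Function.Bijective φ ∧ CyclicMap φ ∧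
    x ≠ y ∧ y ≠ z ∧ x ≠ z ∧
    ((α₁ = w₁ ∧ β₁ = psucc w₁) ∨ (α₁ = psucc w₁ ∧ β₁ = w₁)) ∧
    ((α₂ = w₂ ∧ β₂ = psucc w₂) ∨ (α₂ = psucc w₂ ∧ β₂ = w₂)) ∧
    ((α₃ = w₃ ∧ β₃ = psucc w₃) ∨ (α₃ = psucc w₃ ∧ β₃ = w₃)) ∧
    F.hasEnds x α₁ α₂ ∧ F.hasEnds y β₁ α₃ ∧ F.hasEnds z β₂ β₃ ∧
    F'.hasEnds (e x) (φ β₁) (φ β₂) ∧ F'.hasEnds (e y) (φ α₁) (φ β₃) ∧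
    F'.hasEnds (e z) (φ α₂) (φ α₃) ∧
    (∀ i, i ≠ x → i ≠ y → i ≠ z → F'.hasEnds (e i) (φ (F.fst i)) (φ (F.snd i)))

/-- Generating relation for flat equivalence of flat diagrams. -/
def FlatRel (F F' : FlatDiagram) : Prop :=
  FlatIso F F' ∨ FlatSingleMove F F' ∨ FlatSingleMove F' F ∨
  FlatTwoMove F F' ∨ FlatTwoMove F' F ∨ FlatTriangleMove F F' ∨ FlatTriangleMove F' F

/-- Flat equivalence classes of flat Gauss diagrams. -/
def FlatClass : Type := Quot FlatRel

/-- The flat equivalence class of a flat diagram. -/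
def Fclass (F : FlatDiagram) : FlatClass := Quot.mk _ F

/-! ## The invariants `S_i` and `S_Z` -/

/-- `S_i(G) = ∑_{x ∈ V_i(G)} sgn(x) · F(G^x)`, an element of the free ℤ-module on flat
equivalence classes of flat Gauss diagrams. -/
noncomputable def Sone (G : GaussDiagram) (i : ℤ) : FlatClass →₀ ℤ :=
  ∑ x : Fin G.n,
    if |G.parity x| = i then
      Finsupp.single (Fclass (G.smooth x).flatten) (G.sign x)
    else 0

/-- `S_Z(G) = ∑_{x̄ ∈ V_Z(G)} sgn(x₁)⋯sgn(x_n) · F(G^{x̄})`, an element of the free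
ℤ-module on flat equivalence classes of flat Gauss diagrams. -/
noncomputable def SZ (G : GaussDiagram) {k : ℕ} (Z : Fin k → ℤ) : FlatClass →₀ ℤ :=
  ∑ t : Fin k → Fin G.n,
    if ∀ j, |G.parity (t j)| = Z j then
      Finsupp.single (Fclass (G.smoothList (List.ofFn t)).flatten) (∏ j, G.sign (t j))
    else 0

/-!
A chord `x` contributes to the parity of a chord `c` an amount determined by the positions of
the four endpoints of `c` and `x` in the cyclic order, and unchanged when these endpoints are
moved within pairs of adjacent positions, as long as no such pair contains two of them. The
single and two chord moves keep the cyclic order of the old endpoints, so the old chords keep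
their parities: a chord with adjacent endpoints crosses nothing, and two parallel chords of
opposite signs cancel. The new chord of a single chord move has parity `0`, invisible to
`|V_i|` for `i > 0`; the two new chords of a two chord move have equal parity and opposite
signs. A triangle move exchanges the endpoints in three adjacent pairs, which changes only the
contributions of the three triangle chords to each other's parities, and a case analysis on the
orientations of the three pairs shows that for the admissible signs these changes cancel.
Finally `|V_Z|` is the product of the `|V_{z_j}|`.
-/

lemma arc_eq_true_iff {a b p : ℕ} :
    arc a b p = true ↔ a < b ∧ a < p ∧ p < b ∨ b ≤ a ∧ (p < b ∨ a < p) := by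
  unfold arc; split_ifs <;> simp <;> omega

section Circle

variable {m : ℕ} {a a' b b' c d p p' q q' u v w : Fin m}

lemma val_psucc (u : Fin m) : (psucc u).1 = if u.1 + 1 = m then 0 else u.1 + 1 := by
  have := u.2
  split_ifs with h
  · simp [psucc, h]
  · simp [psucc, Nat.mod_eq_of_lt (show u.1 + 1 < m by omega)]

lemma adjPos_iff_val :
    adjPos u v ↔ (v.1 = u.1 + 1 ∨ v.1 = 0 ∧ u.1 + 1 = m) ∨
      (u.1 = v.1 + 1 ∨ u.1 = 0 ∧ v.1 + 1 = m) := by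
  simp only [adjPos, Fin.ext_iff, val_psucc]
  split_ifs <;> omega

lemma adjPos.symm (h : adjPos u v) : adjPos v u := Or.symm h

lemma adjPos_of_vertex (h : u = w ∧ v = psucc w ∨ u = psucc w ∧ v = w) : adjPos u v := by
  rcases h with ⟨rfl, rfl⟩ | ⟨rfl, rfl⟩
  exacts [Or.inl rfl, Or.inr rfl]

def Near (u v : Fin m) : Prop := v = u ∨ adjPos u v

def Apart (a a' b b' : Fin m) : Prop := a ≠ b ∧ a ≠ b' ∧ a' ≠ b ∧ a' ≠ b'

lemma arc_congr_of_near (ha : Near a a') (hb : Near b b') (hp : Near p p')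
    (hab : Apart a a' b b') (hap : Apart a a' p p') (hbp : Apart b b' p p') :
    arc a b p = arc a' b' p' := by
  simp only [Near, adjPos_iff_val, Apart, ne_eq, Fin.ext_iff] at *
  rw [Bool.eq_iff_iff, arc_eq_true_iff, arc_eq_true_iff]
  omega

lemma arc_rotate (hab : a ≠ b) (hap : a ≠ p) (hbp : b ≠ p) : arc a b p = arc p a b := by
  rw [Bool.eq_iff_iff]
  simp only [arc_eq_true_iff, ne_eq, Fin.ext_iff] at *
  omega

lemma arc_swap (hab : a ≠ b) (hap : a ≠ p) (hbp : b ≠ p) : arc b a p = !arc a b p := by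
  rw [Bool.eq_iff_iff]
  simp only [Bool.not_eq_true', Bool.eq_false_iff, arc_eq_true_iff, ne_eq, Fin.ext_iff] at *
  omega

lemma arc_of_adjPos_left (h : adjPos a p) (hab : a ≠ b) (hbp : b ≠ p) :
    arc a b p = decide (p = psucc a) := by
  rw [Bool.eq_iff_iff]
  simp only [decide_eq_true_iff, arc_eq_true_iff, ne_eq, Fin.ext_iff, val_psucc,
    adjPos_iff_val] at *
  split_ifs <;> omega

lemma arc_of_adjPos_right (h : adjPos b p) (hab : a ≠ b) (hap : a ≠ p) :
    arc a b p = decide (b = psucc p) := by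
  rw [Bool.eq_iff_iff]
  simp only [decide_eq_true_iff, arc_eq_true_iff, ne_eq, Fin.ext_iff, val_psucc,
    adjPos_iff_val] at *
  split_ifs <;> omega

lemma decide_eq_psucc_comm (h : adjPos a b) (hm : 2 < m) :
    decide (a = psucc b) = !decide (b = psucc a) := by
  rw [Bool.eq_iff_iff]
  simp only [Bool.not_eq_true', Bool.eq_false_iff, decide_eq_true_iff, ne_eq, Fin.ext_iff,
    val_psucc, adjPos_iff_val] at *
  split_ifs <;> omega

def crossesAt (a b p q : Fin m) : Bool := arc a b p != arc a b q

def parityTermAt (a b p q : Fin m) (s : ℤ) : ℤ :=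
  if crossesAt a b p q then s * if arc a b p then 1 else -1 else 0

lemma parityTermAt_neg (s : ℤ) : parityTermAt a b p q (-s) = -parityTermAt a b p q s := by
  unfold parityTermAt; split_ifs <;> ring

lemma parityTermAt_of_crossesAt_eq_false (h : crossesAt a b p q = false) (s : ℤ) :
    parityTermAt a b p q s = 0 := by
  simp [parityTermAt, h]

lemma crossesAt_comp_cyclic {l : ℕ} {φ : Fin m → Fin l} (hφ : CyclicMap φ) :
    crossesAt (φ a) (φ b) (φ p) (φ q) = crossesAt a b p q := by
  rw [crossesAt, crossesAt, ← hφ a b p, ← hφ a b q]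

lemma parityTermAt_comp_cyclic {l : ℕ} {φ : Fin m → Fin l} (hφ : CyclicMap φ) (s : ℤ) :
    parityTermAt (φ a) (φ b) (φ p) (φ q) s = parityTermAt a b p q s := by
  rw [parityTermAt, parityTermAt, crossesAt_comp_cyclic hφ, ← hφ a b p]

lemma parityTermAt_congr_of_near (ha : Near a a') (hb : Near b b') (hp : Near p p')
    (hq : Near q q') (hab : Apart a a' b b') (hap : Apart a a' p p') (haq : Apart a a' q q')
    (hbp : Apart b b' p p') (hbq : Apart b b' q q') (s : ℤ) :
    parityTermAt a b p q s = parityTermAt a' b' p' q' s := by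
  rw [parityTermAt, parityTermAt, crossesAt, crossesAt, arc_congr_of_near ha hb hp hab hap hbp,
    arc_congr_of_near ha hb hq hab haq hbq]

lemma crossesAt_eq_false_of_adjPos_left (h : adjPos a b) (hpa : p ≠ a) (hpb : p ≠ b)
    (hqa : q ≠ a) (hqb : q ≠ b) : crossesAt a b p q = false := by
  rw [crossesAt, bne_eq_false_iff_eq, Bool.eq_iff_iff, arc_eq_true_iff, arc_eq_true_iff]
  simp only [adjPos_iff_val, ne_eq, Fin.ext_iff] at *
  omega

lemma crossesAt_eq_false_of_adjPos_right (h : adjPos p q) (hab : a ≠ b) (hap : a ≠ p)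
    (haq : a ≠ q) (hbp : b ≠ p) (hbq : b ≠ q) : crossesAt a b p q = false := by
  rw [crossesAt, bne_eq_false_iff_eq]
  exact arc_congr_of_near (Or.inl rfl) (Or.inl rfl) (Or.inr h) ⟨hab, hab, hab, hab⟩
    ⟨hap, haq, hap, haq⟩ ⟨hbp, hbq, hbp, hbq⟩

lemma parityTermAt_comm_of_adjPos (hh : adjPos a a') (hf : adjPos b b') (hab : a ≠ b)
    (hab' : a ≠ b') (hba' : b ≠ a') (hbb' : b ≠ b') (ha'b' : a' ≠ b') (s : ℤ) :
    parityTermAt a b a' b' s = parityTermAt a' b' a b (-s) := by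
  have hm : 2 < m := by simp only [adjPos_iff_val, ne_eq, Fin.ext_iff] at *; omega
  rw [parityTermAt, parityTermAt, crossesAt, crossesAt, arc_of_adjPos_left hh hab hba',
    arc_of_adjPos_right hf hab hab', arc_of_adjPos_left hh.symm ha'b' hab'.symm,
    arc_of_adjPos_right hf.symm ha'b' hba'.symm, decide_eq_psucc_comm hh hm,
    decide_eq_psucc_comm hf hm]
  cases decide (a' = psucc a) <;> cases decide (b' = psucc b) <;> simp

structure TriangleEnds (a b c d p q : Fin m) : Prop where
  adj_ab : adjPos a b
  adj_cd : adjPos c d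
  adj_pq : adjPos p q
  ne_ac : a ≠ c
  ne_ad : a ≠ d
  ne_ap : a ≠ p
  ne_aq : a ≠ q
  ne_bc : b ≠ c
  ne_bd : b ≠ d
  ne_bp : b ≠ p
  ne_bq : b ≠ q
  ne_cp : c ≠ p
  ne_cq : c ≠ q
  ne_dp : d ≠ p
  ne_dq : d ≠ q

namespace TriangleEnds

lemma swap (h : TriangleEnds a b c d p q) : TriangleEnds b a d c q p :=
  ⟨h.adj_ab.symm, h.adj_cd.symm, h.adj_pq.symm, h.ne_bd, h.ne_bc, h.ne_bq, h.ne_bp, h.ne_ad,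
    h.ne_ac, h.ne_aq, h.ne_ap, h.ne_dq, h.ne_dp, h.ne_cq, h.ne_cp⟩

lemma two_lt (h : TriangleEnds a b c d p q) : 2 < m := by
  have := h.adj_ab; have := h.ne_ac; have := h.ne_bc
  simp only [adjPos_iff_val, ne_eq, Fin.ext_iff] at *
  omega

/-- With `a → c`, `b → p`, `q → d` as the three chords, every arc is one of
`P₁ = (b = a + 1)`, `P₂ = (d = c + 1)`, `P₃ = (q = p + 1)`, `O = arc a c p` or a negation. -/
lemma arc_eq (h : TriangleEnds a b c d p q) :
    arc a c b = decide (b = psucc a) ∧ arc a c q = arc a c p ∧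
      arc a c d = !decide (d = psucc c) ∧ arc b p a = !decide (b = psucc a) ∧
      arc b p c = !arc a c p ∧ arc b p q = !decide (q = psucc p) ∧ arc b p d = !arc a c p ∧
      arc q d a = !arc a c p ∧ arc q d c = decide (d = psucc c) ∧ arc q d b = !arc a c p ∧
      arc q d p = !decide (q = psucc p) := by
  have hm := h.two_lt
  obtain ⟨hab, hcd, hpq, dac, dad, dap, daq, dbc, dbd, dbp, dbq, dcp, dcq, ddp, ddq⟩ := h
  have Ebpc : arc b p c = !arc a c p := by
    rw [arc_rotate dbp dbc dcp.symm, arc_swap dbc dbp dcp,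
      arc_congr_of_near (Or.inr hab.symm) (Or.inl rfl) (Or.inl rfl) ⟨dbc, dbc, dac, dac⟩
        ⟨dbp, dbp, dap, dap⟩ ⟨dcp, dcp, dcp, dcp⟩]
  have Eqda : arc q d a = !arc a c p := by
    rw [arc_congr_of_near (Or.inr hpq.symm) (Or.inr hcd.symm) (Or.inl rfl)
      ⟨ddq.symm, dcq.symm, ddp.symm, dcp.symm⟩ ⟨daq.symm, daq.symm, dap.symm, dap.symm⟩
      ⟨dad.symm, dad.symm, dac.symm, dac.symm⟩,
      arc_rotate dcp.symm dap.symm dac.symm, arc_rotate dap dac dcp.symm, arc_swap dac dap dcp]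
  refine ⟨arc_of_adjPos_left hab dac dbc.symm, ?_, ?_, ?_, Ebpc, ?_, ?_, Eqda,
    arc_of_adjPos_right hcd.symm ddq.symm dcq.symm, ?_, ?_⟩
  · exact arc_congr_of_near (Or.inl rfl) (Or.inl rfl) (Or.inr hpq.symm) ⟨dac, dac, dac, dac⟩
      ⟨daq, dap, daq, dap⟩ ⟨dcq, dcp, dcq, dcp⟩
  · rw [arc_of_adjPos_right hcd dac dad, decide_eq_psucc_comm hcd hm]
  · rw [arc_of_adjPos_left hab.symm dbp dap.symm, decide_eq_psucc_comm hab hm]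
  · rw [arc_of_adjPos_right hpq dbp dbq, decide_eq_psucc_comm hpq hm]
  · rw [← Ebpc]
    exact arc_congr_of_near (Or.inl rfl) (Or.inl rfl) (Or.inr hcd.symm) ⟨dbp, dbp, dbp, dbp⟩
      ⟨dbd, dbc, dbd, dbc⟩ ⟨ddp.symm, dcp.symm, ddp.symm, dcp.symm⟩
  · rw [← Eqda]
    exact arc_congr_of_near (Or.inl rfl) (Or.inl rfl) (Or.inr hab.symm) ⟨ddq.symm, ddq.symm,
      ddq.symm, ddq.symm⟩ ⟨dbq.symm, daq.symm, dbq.symm, daq.symm⟩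
      ⟨dbd.symm, dad.symm, dbd.symm, dad.symm⟩
  · rw [arc_of_adjPos_left hpq.symm ddq.symm ddp, decide_eq_psucc_comm hpq hm]

end TriangleEnds

/-- The chords are `x = a → c`, `y = b → p`, `z = q → d` before the move and
`x = b → d`, `y = a → q`, `z = p → c` after it; `hadm` is `AdmissibleSigns` in these terms. -/
lemma parityTermAt_triangle {sx sy sz : ℤ} (h : TriangleEnds a b c d p q)
    (hadm :
      ((crossesAt a c b p = false ∧ crossesAt b p q d = false ∧ crossesAt a c q d = false ∨
        crossesAt b d a q = false ∧ crossesAt a q p c = false ∧ crossesAt b d p c = false) ∧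
        sy = sz ∧ sx = -sy) ∨
      ((crossesAt a c b p = true ∧ crossesAt b p q d = false ∧ crossesAt a c q d = false ∨
        crossesAt b d a q = true ∧ crossesAt a q p c = false ∧ crossesAt b d p c = false) ∧
        sy = -sx ∧ sz = sx) ∨
      ((crossesAt a c q d = true ∧ crossesAt a c b p = false ∧ crossesAt b p q d = false ∨
        crossesAt b d p c = true ∧ crossesAt b d a q = false ∧ crossesAt a q p c = false) ∧
        sz = -sx ∧ sy = sx) ∨
      ((crossesAt b p q d = true ∧ crossesAt a c b p = false ∧ crossesAt a c q d = false ∨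
        crossesAt a q p c = true ∧ crossesAt b d a q = false ∧ crossesAt b d p c = false) ∧
        sy = sx ∧ sz = sx)) :
    parityTermAt b d a q sy + parityTermAt b d p c sz =
        parityTermAt a c b p sy + parityTermAt a c q d sz ∧
      parityTermAt a q b d sx + parityTermAt a q p c sz =
        parityTermAt b p a c sx + parityTermAt b p q d sz ∧
      parityTermAt p c b d sx + parityTermAt p c a q sy =
        parityTermAt q d a c sx + parityTermAt q d b p sy := by
  obtain ⟨E₁, E₂, E₃, E₄, E₅, E₆, E₇, E₈, E₉, E₁₀, E₁₁⟩ := h.arc_eq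
  -- the configuration after the move is the one before it with each adjacent pair swapped
  obtain ⟨F₁, F₂, F₃, F₄, F₅, F₆, F₇, F₈, F₉, F₁₀, F₁₁⟩ := h.swap.arc_eq
  have hO : arc b d q = arc a c p :=
    arc_congr_of_near (Or.inr h.adj_ab.symm) (Or.inr h.adj_cd.symm) (Or.inr h.adj_pq.symm)
      ⟨h.ne_bd, h.ne_bc, h.ne_ad, h.ne_ac⟩ ⟨h.ne_bq, h.ne_bp, h.ne_aq, h.ne_ap⟩
      ⟨h.ne_dq, h.ne_dp, h.ne_cq, h.ne_cp⟩
  simp only [parityTermAt, crossesAt, E₁, E₂, E₃, E₄, E₅, E₆, E₇, E₈, E₉, E₁₀, E₁₁, F₁, F₂, F₃,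
    F₄, F₅, F₆, F₇, F₈, F₉, F₁₀, F₁₁, hO, decide_eq_psucc_comm h.adj_ab h.two_lt,
    decide_eq_psucc_comm h.adj_cd h.two_lt, decide_eq_psucc_comm h.adj_pq h.two_lt,
    Bool.not_not] at hadm ⊢
  generalize decide (b = psucc a) = P₁ at hadm ⊢
  generalize decide (d = psucc c) = P₂ at hadm ⊢
  generalize decide (q = psucc p) = P₃ at hadm ⊢
  generalize arc a c p = O at hadm ⊢
  cases P₁ <;> cases P₂ <;> cases P₃ <;> cases O <;> simp at hadm ⊢ <;> omega

end Circle

lemma sum_univ_eq_sum_comp_add_sum {α β M : Type*} [Fintype α] [Fintype β] [DecidableEq β]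
    [AddCommMonoid M] {e : α → β} (he : Function.Injective e) {s : Finset β}
    (hs : ∀ a, e a ∉ s) (hcard : Fintype.card α + s.card = Fintype.card β) (f : β → M) :
    ∑ b, f b = ∑ a, f (e a) + ∑ b ∈ s, f b := by
  have hdisj : Disjoint (Finset.univ.map ⟨e, he⟩) s := by
    simpa [Finset.disjoint_left] using hs
  have huniv : (Finset.univ.map ⟨e, he⟩).disjUnion s hdisj = Finset.univ :=
    Finset.eq_univ_of_card _ (by rw [Finset.card_disjUnion, Finset.card_map]; simpa using hcard)
  rw [← huniv, Finset.sum_disjUnion, Finset.sum_map]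
  rfl

def chordOf {n : ℕ} : Fin n ⊕ Fin n → Fin n := Sum.elim id id

@[simp]
lemma chordOf_inl {n : ℕ} (i : Fin n) : chordOf (.inl i) = i := rfl

@[simp]
lemma chordOf_inr {n : ℕ} (i : Fin n) : chordOf (.inr i) = i := rfl

def MovesWithin {n : ℕ} (π : Equiv.Perm (Fin n ⊕ Fin n)) (T : Finset (Fin n)) : Prop :=
  ∀ ε, π ε = ε ∨
    chordOf ε ∈ T ∧ chordOf (π ε) ∈ T ∧ chordOf (π ε) ≠ chordOf ε

lemma MovesWithin.apply_ne {n : ℕ} {π : Equiv.Perm (Fin n ⊕ Fin n)} {T : Finset (Fin n)}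
    (hπ : MovesWithin π T) {δ δ' : Fin n ⊕ Fin n} (hne : δ ≠ δ')
    (h : ¬(chordOf δ ∈ T ∧ chordOf δ' ∈ T) ∨ chordOf δ = chordOf δ') : π δ ≠ δ' := by
  rintro rfl
  rcases hπ δ with hfix | ⟨h₁, h₂, h₃⟩
  · exact hne hfix.symm
  · rcases h with h | h
    exacts [h ⟨h₁, h₂⟩, h₃ h.symm]

def triangleSwap {n : ℕ} (x y z : Fin n) : Equiv.Perm (Fin n ⊕ Fin n) :=
  Equiv.swap (.inl x) (.inl y) * Equiv.swap (.inr x) (.inr z) * Equiv.swap (.inr y) (.inl z)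

section TriangleSwap

variable {n : ℕ} {x y z : Fin n}

lemma triangleSwap_apply (hxy : x ≠ y) (hyz : y ≠ z) (hxz : x ≠ z) :
    triangleSwap x y z (.inl x) = .inl y ∧ triangleSwap x y z (.inl y) = .inl x ∧
    triangleSwap x y z (.inr x) = .inr z ∧ triangleSwap x y z (.inr z) = .inr x ∧
    triangleSwap x y z (.inr y) = .inl z ∧ triangleSwap x y z (.inl z) = .inr y := by
  simp [triangleSwap, Equiv.swap_apply_of_ne_of_ne, hxy, hyz, hxz, hxy.symm, hyz.symm, hxz.symm]

lemma triangleSwap_apply_of_ne {c : Fin n} (hx : c ≠ x) (hy : c ≠ y) (hz : c ≠ z) :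
    triangleSwap x y z (.inl c) = .inl c ∧ triangleSwap x y z (.inr c) = .inr c := by
  simp [triangleSwap, Equiv.swap_apply_of_ne_of_ne, hx, hy, hz]

lemma triangleSwap_movesWithin (hxy : x ≠ y) (hyz : y ≠ z) (hxz : x ≠ z) :
    MovesWithin (triangleSwap x y z) {x, y, z} := by
  obtain ⟨hx₁, hy₁, hx₂, hz₂, hy₃, hz₃⟩ := triangleSwap_apply hxy hyz hxz
  rintro (c | c) <;>
    obtain rfl | rfl | rfl | ⟨hcx, hcy, hcz⟩ :
        c = x ∨ c = y ∨ c = z ∨ c ≠ x ∧ c ≠ y ∧ c ≠ z := by tauto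
  all_goals first
    | exact Or.inl (triangleSwap_apply_of_ne hcx hcy hcz).1
    | exact Or.inl (triangleSwap_apply_of_ne hcx hcy hcz).2
    | simp [hx₁, hy₁, hx₂, hz₂, hy₃, hz₃, hxy, hyz, hxz, hxy.symm, hyz.symm, hxz.symm]

end TriangleSwap

namespace GaussDiagram

variable {G G' : GaussDiagram}

def endpoint (G : GaussDiagram) : Fin G.n ⊕ Fin G.n → Fin (2 * G.n) := Sum.elim G.head G.foot

@[simp]
lemma endpoint_inl (i : Fin G.n) : G.endpoint (.inl i) = G.head i := rfl

@[simp]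
lemma endpoint_inr (i : Fin G.n) : G.endpoint (.inr i) = G.foot i := rfl

lemma Proper.head_inj (hP : G.Proper) {i j : Fin G.n} : G.head i = G.head j ↔ i = j :=
  ⟨fun h => Sum.inl_injective (hP.1 h), congrArg G.head⟩

lemma Proper.foot_inj (hP : G.Proper) {i j : Fin G.n} : G.foot i = G.foot j ↔ i = j :=
  ⟨fun h => Sum.inr_injective (hP.1 h), congrArg G.foot⟩

lemma Proper.head_ne_foot (hP : G.Proper) (i j : Fin G.n) : G.head i ≠ G.foot j :=
  hP.1.ne (a₁ := .inl i) (a₂ := .inr j) Sum.inl_ne_inr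

lemma Proper.foot_ne_head (hP : G.Proper) (i j : Fin G.n) : G.foot i ≠ G.head j :=
  (hP.head_ne_foot j i).symm

def parityTerm (G : GaussDiagram) (c x : Fin G.n) : ℤ :=
  if G.crosses c x then G.sign x * G.inter c x else 0

lemma parity_eq_sum_parityTerm (c : Fin G.n) : G.parity c = ∑ x, G.parityTerm c x := rfl

@[simp]
lemma parityTerm_self (c : Fin G.n) : G.parityTerm c c = 0 := by
  simp [parityTerm, crosses]

lemma crosses_of_ne {c x : Fin G.n} (h : x ≠ c) :
    G.crosses c x = crossesAt (G.head c) (G.foot c) (G.head x) (G.foot x) := by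
  simp [crosses, crossesAt, h]

lemma parityTerm_of_ne {c x : Fin G.n} (h : x ≠ c) :
    G.parityTerm c x = parityTermAt (G.head c) (G.foot c) (G.head x) (G.foot x) (G.sign x) := by
  rw [parityTerm, crosses_of_ne h, parityTermAt, inter]

lemma cardV_eq_add {e : Fin G.n → Fin G'.n} (he : Function.Injective e) {s : Finset (Fin G'.n)}
    (hs : ∀ i, e i ∉ s) (hcard : G.n + s.card = G'.n) (hsign : ∀ j, G'.sign (e j) = G.sign j)
    (hpar : ∀ j, G'.parity (e j) = G.parity j) (i : ℤ) :
    G'.cardV i = G.cardV i + ∑ c ∈ s, if |G'.parity c| = i then G'.sign c else 0 := by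
  rw [cardV, sum_univ_eq_sum_comp_add_sum he hs (by simpa using hcard)]
  simp only [hpar, hsign, cardV]

lemma cardVTuple_eq_prod (G : GaussDiagram) {k : ℕ} (Z : Fin k → ℤ) :
    G.cardVTuple Z = ∏ j, G.cardV (Z j) := by
  simp only [cardVTuple, cardV, Finset.prod_univ_sum, Fintype.piFinset_univ,
    Fintype.prod_ite_zero]
  congr! 2

structure IsEmbedding (G G' : GaussDiagram) (e : Fin G.n → Fin G'.n)
    (φ : Fin (2 * G.n) → Fin (2 * G'.n)) : Prop where
  injective : Function.Injective e
  cyclic : CyclicMap φ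
  head_eq : ∀ i, G'.head (e i) = φ (G.head i)
  foot_eq : ∀ i, G'.foot (e i) = φ (G.foot i)
  sign_eq : ∀ i, G'.sign (e i) = G.sign i

namespace IsEmbedding

variable {e : Fin G.n → Fin G'.n} {φ : Fin (2 * G.n) → Fin (2 * G'.n)}

lemma crosses_eq (hE : IsEmbedding G G' e φ) (j x : Fin G.n) :
    G'.crosses (e j) (e x) = G.crosses j x := by
  by_cases hx : x = j
  · subst hx; simp [crosses]
  · rw [crosses_of_ne hx, crosses_of_ne (hE.injective.ne hx), hE.head_eq, hE.foot_eq,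
      hE.head_eq, hE.foot_eq, crossesAt_comp_cyclic hE.cyclic]

lemma parityTerm_eq (hE : IsEmbedding G G' e φ) (j x : Fin G.n) :
    G'.parityTerm (e j) (e x) = G.parityTerm j x := by
  by_cases hx : x = j
  · subst hx; simp
  · rw [parityTerm_of_ne hx, parityTerm_of_ne (hE.injective.ne hx), hE.head_eq, hE.foot_eq,
      hE.head_eq, hE.foot_eq, hE.sign_eq, parityTermAt_comp_cyclic hE.cyclic]

lemma parity_eq_add (hE : IsEmbedding G G' e φ) {s : Finset (Fin G'.n)} (hs : ∀ i, e i ∉ s)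
    (hcard : G.n + s.card = G'.n) (j : Fin G.n) :
    G'.parity (e j) = G.parity j + ∑ c ∈ s, G'.parityTerm (e j) c := by
  rw [parity_eq_sum_parityTerm,
    sum_univ_eq_sum_comp_add_sum hE.injective hs (by simpa using hcard)]
  simp only [hE.parityTerm_eq, parity_eq_sum_parityTerm]

end IsEmbedding

lemma cardV_eq_of_singleChordMove (h : SingleChordMove G G') {i : ℤ} (hi : i ≠ 0) :
    G.cardV i = G'.cardV i := by
  obtain ⟨-, hP', hn, e, φ, y, he, hey, hφ, hmap, hadj⟩ := h
  have hE : IsEmbedding G G' e φ :=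
    ⟨he, hφ, fun i => (hmap i).1, fun i => (hmap i).2.1, fun i => (hmap i).2.2⟩
  have hs : ∀ j, e j ∉ ({y} : Finset _) := by simpa using hey
  have hcard : G.n + ({y} : Finset _).card = G'.n := by simp [hn]
  have hpar : ∀ j, G'.parity (e j) = G.parity j := fun j => by
    rw [hE.parity_eq_add hs hcard, Finset.sum_singleton, parityTerm_of_ne (hey j).symm,
      parityTermAt_of_crossesAt_eq_false, add_zero]
    apply crossesAt_eq_false_of_adjPos_right hadj <;>
      simp [hP'.head_inj, hP'.foot_inj, hP'.head_ne_foot, hP'.foot_ne_head, hey j]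
  have hpar_y : G'.parity y = 0 := by
    refine Finset.sum_eq_zero fun c _ => ?_
    by_cases hc : c = y
    · subst hc; exact parityTerm_self c
    rw [← parityTerm, parityTerm_of_ne hc, parityTermAt_of_crossesAt_eq_false]
    apply crossesAt_eq_false_of_adjPos_left hadj <;>
      simp [hP'.head_inj, hP'.foot_inj, hP'.head_ne_foot, hP'.foot_ne_head, hc]
  rw [cardV_eq_add he hs hcard hE.sign_eq hpar, Finset.sum_singleton, hpar_y, abs_zero,
    if_neg (Ne.symm hi), add_zero]

lemma cardV_eq_of_twoChordMove (h : TwoChordMove G G') (i : ℤ) : G.cardV i = G'.cardV i := by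
  obtain ⟨-, hP', hn, e, φ, y₁, y₂, he, hy, hey, hφ, hmap, hadjh, hadjf, hsign⟩ := h
  have hE : IsEmbedding G G' e φ :=
    ⟨he, hφ, fun i => (hmap i).1, fun i => (hmap i).2.1, fun i => (hmap i).2.2⟩
  have hs : ∀ j, e j ∉ ({y₁, y₂} : Finset _) := by simpa using hey
  have hcard : G.n + ({y₁, y₂} : Finset _).card = G'.n := by simp [hn, hy]
  have hpar : ∀ j, G'.parity (e j) = G.parity j := fun j => by
    obtain ⟨h₁, h₂⟩ := hey j
    rw [hE.parity_eq_add hs hcard, Finset.sum_pair hy, parityTerm_of_ne h₁.symm,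
      parityTerm_of_ne h₂.symm, hsign, parityTermAt_neg,
      parityTermAt_congr_of_near (Or.inl rfl) (Or.inl rfl) (Or.inr hadjh) (Or.inr hadjf),
      neg_add_cancel, add_zero] <;>
      simp [Apart, hP'.head_inj, hP'.foot_inj, hP'.head_ne_foot, hP'.foot_ne_head, h₁, h₂]
  have hmutual : G'.parityTerm y₁ y₂ = G'.parityTerm y₂ y₁ := by
    rw [parityTerm_of_ne hy.symm, parityTerm_of_ne hy, hsign,
      parityTermAt_comm_of_adjPos hadjh hadjf] <;>
      simp [hP'.foot_inj, hP'.head_ne_foot, hP'.foot_ne_head, hy]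
  have hold : ∀ j, G'.parityTerm y₁ (e j) = G'.parityTerm y₂ (e j) := fun j => by
    obtain ⟨h₁, h₂⟩ := hey j
    rw [parityTerm_of_ne h₁, parityTerm_of_ne h₂,
      parityTermAt_congr_of_near (Or.inr hadjh) (Or.inr hadjf) (Or.inl rfl) (Or.inl rfl)] <;>
      simp [Apart, hP'.head_inj, hP'.foot_inj, hP'.head_ne_foot, hP'.foot_ne_head, Ne.symm h₁,
        Ne.symm h₂]
  have hpar_y : G'.parity y₁ = G'.parity y₂ := by
    have hsum := sum_univ_eq_sum_comp_add_sum (M := ℤ) hE.injective hs (by simpa using hcard)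
    rw [parity_eq_sum_parityTerm, parity_eq_sum_parityTerm, hsum, hsum, Finset.sum_pair hy,
      Finset.sum_pair hy, parityTerm_self, parityTerm_self, hmutual]
    simp only [hold, zero_add, add_zero]
  rw [cardV_eq_add he hs hcard hE.sign_eq hpar, Finset.sum_pair hy, hpar_y, hsign]
  split_ifs <;> simp

abbrev permEnds (G : GaussDiagram) (π : Equiv.Perm (Fin G.n ⊕ Fin G.n)) : GaussDiagram where
  n := G.n
  head i := G.endpoint (π (.inl i))
  foot i := G.endpoint (π (.inr i))
  sign := G.sign

section PermEnds

variable {π : Equiv.Perm (Fin G.n ⊕ Fin G.n)} {T : Finset (Fin G.n)}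

lemma apart_endpoint (hP : G.Proper) (hπ : MovesWithin π T) {ε ε' : Fin G.n ⊕ Fin G.n}
    (hne : ε ≠ ε')
    (h : ¬(chordOf ε ∈ T ∧ chordOf ε' ∈ T) ∨ chordOf ε = chordOf ε') :
    Apart (G.endpoint ε) (G.endpoint (π ε)) (G.endpoint ε') (G.endpoint (π ε')) := by
  have h' : ¬(chordOf ε' ∈ T ∧ chordOf ε ∈ T) ∨ chordOf ε' = chordOf ε :=
    h.imp (fun h ⟨h₁, h₂⟩ => h ⟨h₂, h₁⟩) Eq.symm
  exact ⟨hP.1.ne hne, hP.1.ne (hπ.apply_ne hne.symm h').symm, hP.1.ne (hπ.apply_ne hne h),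
    hP.1.ne (π.injective.ne hne)⟩

variable (hP : G.Proper) (hnear : ∀ ε, Near (G.endpoint ε) (G.endpoint (π ε)))
  (hπ : MovesWithin π T)
include hP hnear hπ

lemma parityTerm_permEnds {j c : Fin G.n} (hT : j ∉ T ∨ c ∉ T) :
    (G.permEnds π).parityTerm j c = G.parityTerm j c := by
  by_cases hc : c = j
  · subst hc; simp
  have hout : ¬(j ∈ T ∧ c ∈ T) := by tauto
  have hinl : (Sum.inl j : Fin G.n ⊕ Fin G.n) ≠ .inl c := by simpa using Ne.symm hc
  have hinr : (Sum.inr j : Fin G.n ⊕ Fin G.n) ≠ .inr c := by simpa using Ne.symm hc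
  rw [parityTerm_of_ne hc, parityTerm_of_ne (G := G.permEnds π) hc]
  exact (parityTermAt_congr_of_near (hnear _) (hnear _) (hnear _) (hnear _)
    (apart_endpoint hP hπ Sum.inl_ne_inr (Or.inr rfl)) (apart_endpoint hP hπ hinl (Or.inl hout))
    (apart_endpoint hP hπ Sum.inl_ne_inr (Or.inl hout))
    (apart_endpoint hP hπ Sum.inr_ne_inl (Or.inl hout))
    (apart_endpoint hP hπ hinr (Or.inl hout)) _).symm

lemma parity_permEnds
    (hT : ∀ j ∈ T, ∑ c ∈ T, (G.permEnds π).parityTerm j c = ∑ c ∈ T, G.parityTerm j c)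
    (j : Fin G.n) : (G.permEnds π).parity j = G.parity j := by
  rw [parity_eq_sum_parityTerm, parity_eq_sum_parityTerm, ← Finset.sum_add_sum_compl T,
    ← Finset.sum_add_sum_compl T]
  congr 1
  · by_cases hj : j ∈ T
    · exact hT j hj
    · exact Finset.sum_congr rfl fun c _ => parityTerm_permEnds hP hnear hπ (Or.inl hj)
  · exact Finset.sum_congr rfl fun c hc =>
      parityTerm_permEnds hP hnear hπ (Or.inr (Finset.mem_compl.1 hc))

end PermEnds

section Triangle

variable {x y z : Fin G.n} {w₁ w₂ w₃ : Fin (2 * G.n)}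

lemma _root_.TriangleVertices.near_endpoint (hV : TriangleVertices G x y z w₁ w₂ w₃)
    (ε : Fin G.n ⊕ Fin G.n) : Near (G.endpoint ε) (G.endpoint (triangleSwap x y z ε)) := by
  obtain ⟨hxy, hyz, hxz, hv₁, hv₂, hv₃⟩ := hV
  obtain ⟨hx₁, hy₁, hx₂, hz₂, hy₃, hz₃⟩ := triangleSwap_apply hxy hyz hxz
  rcases ε with c | c <;>
    obtain rfl | rfl | rfl | ⟨hcx, hcy, hcz⟩ :
        c = x ∨ c = y ∨ c = z ∨ c ≠ x ∧ c ≠ y ∧ c ≠ z := by tauto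
  · rw [hx₁]; exact Or.inr (adjPos_of_vertex hv₁)
  · rw [hy₁]; exact Or.inr (adjPos_of_vertex hv₁).symm
  · rw [hz₃]; exact Or.inr (adjPos_of_vertex hv₃).symm
  · rw [(triangleSwap_apply_of_ne hcx hcy hcz).1]; exact Or.inl rfl
  · rw [hx₂]; exact Or.inr (adjPos_of_vertex hv₂)
  · rw [hy₃]; exact Or.inr (adjPos_of_vertex hv₃)
  · rw [hz₂]; exact Or.inr (adjPos_of_vertex hv₂).symm
  · rw [(triangleSwap_apply_of_ne hcx hcy hcz).2]; exact Or.inl rfl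

lemma _root_.TriangleVertices.parity_permEnds_triangleSwap (hP : G.Proper)
    (hV : TriangleVertices G x y z w₁ w₂ w₃)
    (hadm : AdmissibleSigns G (G.permEnds (triangleSwap x y z)) x y z x y z) (j : Fin G.n) :
    (G.permEnds (triangleSwap x y z)).parity j = G.parity j := by
  obtain ⟨hxy, hyz, hxz, hv₁, hv₂, hv₃⟩ := id hV
  obtain ⟨hx₁, hy₁, hx₂, hz₂, hy₃, hz₃⟩ := triangleSwap_apply hxy hyz hxz
  simp only [AdmissibleSigns, crosses_of_ne hxy.symm, crosses_of_ne hyz.symm,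
    crosses_of_ne hxz.symm, crosses_of_ne (G := G.permEnds _) hxy.symm,
    crosses_of_ne (G := G.permEnds _) hyz.symm, crosses_of_ne (G := G.permEnds _) hxz.symm,
    hx₁, hy₁, hx₂, hz₂, hy₃, hz₃, endpoint_inl, endpoint_inr] at hadm
  obtain ⟨hTx, hTy, hTz⟩ := parityTermAt_triangle ⟨adjPos_of_vertex hv₁, adjPos_of_vertex hv₂,
    adjPos_of_vertex hv₃, hP.head_ne_foot x x, hP.head_ne_foot x z, hP.head_ne_foot x y,
    mt hP.head_inj.1 hxz, hP.head_ne_foot y x, hP.head_ne_foot y z, hP.head_ne_foot y y,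
    mt hP.head_inj.1 hyz, mt hP.foot_inj.1 hxy, hP.foot_ne_head x z, mt hP.foot_inj.1 hyz.symm,
    hP.foot_ne_head z z⟩ hadm
  refine parity_permEnds hP hV.near_endpoint (triangleSwap_movesWithin hxy hyz hxz) ?_ j
  have hx : x ∉ ({y, z} : Finset _) := by simp [hxy, hxz]
  have hy : y ∉ ({z} : Finset _) := by simp [hyz]
  simp only [Finset.mem_insert, Finset.mem_singleton]
  rintro _ (rfl | rfl | rfl) <;>
    simp only [Finset.sum_insert hx, Finset.sum_insert hy, Finset.sum_singleton,
      parityTerm_self, zero_add, add_zero]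
  · rw [parityTerm_of_ne hxy.symm, parityTerm_of_ne hxz.symm,
      parityTerm_of_ne (G := G.permEnds _) hxy.symm, parityTerm_of_ne (G := G.permEnds _) hxz.symm]
    simpa [hx₁, hy₁, hx₂, hz₂, hy₃, hz₃] using hTx
  · rw [parityTerm_of_ne hxy, parityTerm_of_ne hyz.symm,
      parityTerm_of_ne (G := G.permEnds _) hxy, parityTerm_of_ne (G := G.permEnds _) hyz.symm]
    simpa [hx₁, hy₁, hx₂, hz₂, hy₃, hz₃] using hTy
  · rw [parityTerm_of_ne hxz, parityTerm_of_ne hyz, parityTerm_of_ne (G := G.permEnds _) hxz,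
      parityTerm_of_ne (G := G.permEnds _) hyz]
    simpa [hx₁, hy₁, hx₂, hz₂, hy₃, hz₃] using hTz

end Triangle

lemma cardV_eq_of_triangleMove (h : TriangleMove G G') (i : ℤ) : G.cardV i = G'.cardV i := by
  obtain ⟨hP, -, e, φ, x, y, z, w₁, w₂, w₃, he, -, hφ, hV, hsign, hout,
    ⟨⟨hx₁, hy₁⟩, ⟨hx₂, hz₂⟩, ⟨hy₃, hz₃⟩⟩, hadm⟩ := h
  obtain ⟨sx₁, sy₁, sx₂, sz₂, sy₃, sz₃⟩ := triangleSwap_apply hV.1 hV.2.1 hV.2.2.1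
  -- up to the relabelling `(e, φ)`, the move exchanges the endpoints as `triangleSwap` does
  have hE : IsEmbedding (G.permEnds (triangleSwap x y z)) G' e φ := by
    refine ⟨he.1, hφ, fun c => ?_, fun c => ?_, hsign⟩ <;>
      obtain hc | hc | hc | ⟨hcx, hcy, hcz⟩ :
          c = x ∨ c = y ∨ c = z ∨ c ≠ x ∧ c ≠ y ∧ c ≠ z := by tauto
    all_goals first
      | simp [hc, hx₁, hy₁, hx₂, hz₂, hy₃, hz₃, sx₁, sy₁, sx₂, sz₂, sy₃, sz₃]
      | simp [hout c hcx hcy hcz, triangleSwap_apply_of_ne hcx hcy hcz]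
  have hadm' : AdmissibleSigns G (G.permEnds (triangleSwap x y z)) x y z x y z := by
    simpa only [AdmissibleSigns, hE.crosses_eq] using hadm
  have hcard : G.n + (∅ : Finset (Fin G'.n)).card = G'.n := by
    simpa using Fintype.card_of_bijective he
  have hpar : ∀ j, G'.parity (e j) = G.parity j := fun j => by
    rw [hE.parity_eq_add (by simp) hcard, Finset.sum_empty, add_zero,
      hV.parity_permEnds_triangleSwap hP hadm']
  rw [cardV_eq_add he.1 (by simp) hcard hsign hpar, Finset.sum_empty, add_zero]

lemma cardV_eq_of_gaussMove (h : GaussMove G G') {i : ℤ} (hi : i ≠ 0) :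
    G.cardV i = G'.cardV i := by
  rcases h with h | h | h | h | h | h
  · exact cardV_eq_of_singleChordMove h hi
  · exact (cardV_eq_of_singleChordMove h hi).symm
  · exact cardV_eq_of_twoChordMove h i
  · exact (cardV_eq_of_twoChordMove h i).symm
  · exact cardV_eq_of_triangleMove h i
  · exact (cardV_eq_of_triangleMove h i).symm

lemma cardV_eq_of_reflTransGen (h : Relation.ReflTransGen GaussMove G G') {i : ℤ}
    (hi : i ≠ 0) : G.cardV i = G'.cardV i := by
  induction h with
  | refl => rfl
  | tail _ hmove ih => exact ih.trans (cardV_eq_of_gaussMove hmove hi)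

end GaussDiagram

theorem cardV_and_cardVTuple_invariant_general (i : ℤ) (hi : 0 < i)
    {n : ℕ} (Z : Fin n → ℤ) (hpos : ∀ j, 0 < Z j)
    (G G' : GaussDiagram) (h : Relation.ReflTransGen GaussMove G G') :
    G.cardV i = G'.cardV i ∧ G.cardVTuple Z = G'.cardVTuple Z := by
  refine ⟨GaussDiagram.cardV_eq_of_reflTransGen h hi.ne', ?_⟩
  rw [GaussDiagram.cardVTuple_eq_prod, GaussDiagram.cardVTuple_eq_prod]
  exact Finset.prod_congr rfl fun j _ => GaussDiagram.cardV_eq_of_reflTransGen h (hpos j).ne'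

/-- For `i > 0` and `Z = (z₁, …, z_n)` with `0 < z₁ < … < z_n`, the
signed cardinalities `|V_i|` and `|V_Z|` are unchanged by a single chord move, a two chord
move or a triangle move — hence by any finite sequence of chord moves. -/
theorem cardV_and_cardVTuple_invariant (i : ℤ) (hi : 0 < i)
    {n : ℕ} (Z : Fin n → ℤ) (hpos : ∀ j, 0 < Z j) (hmono : StrictMono Z)
    (G G' : GaussDiagram) (h : Relation.ReflTransGen GaussMove G G') :
    G.cardV i = G'.cardV i ∧ G.cardVTuple Z = G'.cardVTuple Z :=
  cardV_and_cardVTuple_invariant_general i hi Z hpos G G' h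
end

section
/- Let i ≥ 1. The invariant S_i is a degree one Vassiliev invariant: for every Gauss diagram G and every pair of distinct chords a, b of G, Σ_{(ε_1,ε_2) ∈ {±1}^2} ε_1 ε_2 · S_i(G_{((ε_1,ε_2),(a,b))}) = 0 in the free ℤ-module on flat equivalence classes of flat Gauss diagrams, where G_{((ε_1,ε_2),(a,b))} is obtained from G by flipping (interchanging head and foot and negating the sign of) a if ε_1 = −1 and flipping b if ε_2 = −1. -/
/-!
Flipping a chord `c` reverses the arc from its head to its foot, so `int_c(x)` changes sign for
every `x ∈ N_c` and `p(c)` is negated; for a flipped chord `x ∈ N_c` both `sgn(x)` and `int_c(x)`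
change sign, so it contributes to `p(c)` as before. Hence flips preserve `|p|` and the sets `V_i`.
Smoothing a flipped chord produces the same flat diagram read backwards around the circle, so the
flat classes `F(G^x)` are unchanged too. Thus flipping only negates the coefficients of the flipped
chords in `S_i`, and in the alternating sum the summand of `x` gets the coefficient
`(1 - ε_a(x))(1 - ε_b(x))`, which vanishes because `x` cannot be both `a` and `b`.
-/

lemma arc_swap_s13 {h f p : ℕ} (hf : h ≠ f) (ph : p ≠ h) (pf : p ≠ f) :
    arc f h p = !arc h f p := by
  simp only [arc]
  split <;> split <;> rw [← decide_not, decide_eq_decide] <;> omega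

lemma antiCyclicMap_rev {m : ℕ} : AntiCyclicMap (Fin.rev : Fin m → Fin m) := by
  intro a b p
  simp only [arc, Fin.val_rev]
  have := a.2; have := b.2; have := p.2
  split <;> split <;> rw [decide_eq_decide] <;> omega

lemma mod_eq_self_or_sub_of_lt_two_mul {a m : ℕ} (h : a < 2 * m) :
    a < m ∧ a % m = a ∨ m ≤ a ∧ a % m = a - m := by
  rcases lt_or_ge a m with ham | ham
  · exact .inl ⟨ham, Nat.mod_eq_of_lt ham⟩
  · exact .inr ⟨ham, by rw [Nat.mod_eq_sub_mod ham, Nat.mod_eq_of_lt (by omega)]⟩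

lemma smoothPos_lt {m h f p : ℕ} (hm : h < m) (fm : f < m) (pm : p < m)
    (hf : h ≠ f) (ph : p ≠ h) (pf : p ≠ f) : smoothPos m h f p < m - 2 := by
  have := mod_eq_self_or_sub_of_lt_two_mul (m := m) (a := f + m - (h + 1)) (by omega)
  have := mod_eq_self_or_sub_of_lt_two_mul (m := m) (a := p + m - (h + 1)) (by omega)
  simp only [smoothPos]
  generalize (f + m - (h + 1)) % m = d at *
  generalize (p + m - (h + 1)) % m = r at *
  split_ifs <;> omega

lemma smoothPos_swap {m h f p : ℕ} (hm : h < m) (fm : f < m) (pm : p < m)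
    (hf : h ≠ f) (ph : p ≠ h) (pf : p ≠ f) : smoothPos m f h p = m - 3 - smoothPos m h f p := by
  have ed := mod_eq_self_or_sub_of_lt_two_mul (m := m) (a := f + m - (h + 1)) (by omega)
  have er := mod_eq_self_or_sub_of_lt_two_mul (m := m) (a := p + m - (h + 1)) (by omega)
  have ed' := mod_eq_self_or_sub_of_lt_two_mul (m := m) (a := h + m - (f + 1)) (by omega)
  have er' := mod_eq_self_or_sub_of_lt_two_mul (m := m) (a := p + m - (f + 1)) (by omega)
  simp only [smoothPos]
  -- `d`, `d'` count the positions strictly inside the two arcs cut out by `h` and `f`;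
  -- `r`, `r'` are the offsets of `p` past `h` and past `f`.
  generalize (f + m - (h + 1)) % m = d at *
  generalize (p + m - (h + 1)) % m = r at *
  generalize (h + m - (f + 1)) % m = d' at *
  generalize (p + m - (f + 1)) % m = r' at *
  have hdd : d + d' = m - 2 := by omega
  have hrd : r ≠ d := by omega
  have hr'_lt : r < d → r' = r + d' + 1 := by omega
  have hr'_gt : d < r → r' = r - d - 1 := by omega
  have : r < m - 1 := by omega
  clear ed er ed' er'
  split_ifs <;> omega

lemma skipAt_ne {n : ℕ} (x : Fin n) (i : Fin (n - 1)) : skipAt x i ≠ x := by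
  unfold skipAt
  split <;> simp only [ne_eq, Fin.ext_iff] <;> omega

lemma smoothPos_swap_mod {n h f p : ℕ} (hn : h < 2 * n) (fn : f < 2 * n) (pn : p < 2 * n)
    (hf : h ≠ f) (ph : p ≠ h) (pf : p ≠ f) :
    smoothPos (2 * n) f h p % (2 * (n - 1)) =
      2 * (n - 1) - (smoothPos (2 * n) h f p % (2 * (n - 1)) + 1) := by
  have hlt := smoothPos_lt hn fn pn hf ph pf
  have hlt' := smoothPos_lt fn hn pn hf.symm pf ph
  rw [smoothPos_swap hn fn pn hf ph pf, Nat.mod_eq_of_lt (by omega), Nat.mod_eq_of_lt (by omega)]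
  omega

def flipFactor {α : Type*} [DecidableEq α] (S : Finset α) (x : α) : ℤ := if x ∈ S then -1 else 1

lemma abs_flipFactor {α : Type*} [DecidableEq α] (S : Finset α) (x : α) :
    |flipFactor S x| = 1 := by
  unfold flipFactor
  split_ifs <;> simp

lemma flipFactor_alternating_sum {α : Type*} [DecidableEq α] {a b : α} (hab : a ≠ b) (x : α) :
    1 - flipFactor {a} x - flipFactor {b} x + flipFactor {a, b} x = 0 := by
  rcases eq_or_ne x a with rfl | hxa
  · simp [flipFactor, hab]
  · rcases eq_or_ne x b with rfl | hxb <;> simp [flipFactor, *]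

namespace GaussDiagram

variable {G : GaussDiagram}

lemma Proper.sum_elim_val_injective (hG : G.Proper) :
    Function.Injective fun e => (Sum.elim G.head G.foot e).1 :=
  Fin.val_injective.comp hG.1

lemma Proper.head_val_ne_foot_val (hG : G.Proper) (i j : Fin G.n) :
    (G.head i).1 ≠ (G.foot j).1 :=
  fun h => Sum.inl_ne_inr (hG.sum_elim_val_injective h)

lemma Proper.head_val_ne_of_ne (hG : G.Proper) {k x : Fin G.n} (h : k ≠ x) :
    (G.head k).1 ≠ (G.head x).1 ∧ (G.head k).1 ≠ (G.foot x).1 :=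
  ⟨fun e => h (Sum.inl_injective (hG.sum_elim_val_injective e)), hG.head_val_ne_foot_val k x⟩

lemma Proper.foot_val_ne_of_ne (hG : G.Proper) {k x : Fin G.n} (h : k ≠ x) :
    (G.foot k).1 ≠ (G.head x).1 ∧ (G.foot k).1 ≠ (G.foot x).1 :=
  ⟨(hG.head_val_ne_foot_val x k).symm,
    fun e => h (Sum.inr_injective (hG.sum_elim_val_injective e))⟩

lemma Proper.arc_swap_of_ne (hG : G.Proper) {x c : Fin G.n} (h : x ≠ c) :
    arc (G.foot c).1 (G.head c).1 (G.head x).1 = !arc (G.head c).1 (G.foot c).1 (G.head x).1 ∧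
    arc (G.foot c).1 (G.head c).1 (G.foot x).1 = !arc (G.head c).1 (G.foot c).1 (G.foot x).1 :=
  ⟨arc_swap_s13 (hG.head_val_ne_foot_val c c) (hG.head_val_ne_of_ne h).1 (hG.head_val_ne_of_ne h).2,
    arc_swap_s13 (hG.head_val_ne_foot_val c c) (hG.foot_val_ne_of_ne h).1 (hG.foot_val_ne_of_ne h).2⟩

lemma flipSet_sign (S : Finset (Fin G.n)) (x : Fin G.n) :
    (G.flipSet S).sign x = flipFactor S x * G.sign x := by
  simp only [flipSet, flipFactor]
  split_ifs <;> simp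

lemma crosses_flipSet (hG : G.Proper) (S : Finset (Fin G.n)) (c x : Fin G.n) :
    (G.flipSet S).crosses c x = G.crosses c x := by
  by_cases hxc : x = c
  · subst hxc
    simp only [crosses, bne_self_eq_false, bne_self_eq_false (α := Fin (G.flipSet S).n) x,
      Bool.false_and]
  obtain ⟨hhead, hfoot⟩ := hG.arc_swap_of_ne hxc
  by_cases hcS : c ∈ S <;> by_cases hxS : x ∈ S <;>
    simp only [crosses, flipSet, hcS, hxS, if_true, if_false, hhead, hfoot] <;>
    cases arc (G.head c).1 (G.foot c).1 (G.head x).1 <;>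
    cases arc (G.head c).1 (G.foot c).1 (G.foot x).1 <;> rfl

lemma sign_mul_inter_flipSet (hG : G.Proper) (S : Finset (Fin G.n)) {c x : Fin G.n}
    (hcx : G.crosses c x) :
    (G.flipSet S).sign x * (G.flipSet S).inter c x = flipFactor S c * (G.sign x * G.inter c x) := by
  simp only [crosses, Bool.and_eq_true, bne_iff_ne, ne_eq] at hcx
  obtain ⟨hxc, harc⟩ := hcx
  obtain ⟨hhead, hfoot⟩ := hG.arc_swap_of_ne hxc
  revert harc
  by_cases hcS : c ∈ S <;> by_cases hxS : x ∈ S <;>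
    simp only [inter, flipSet, flipFactor, hcS, hxS, if_true, if_false, hhead, hfoot] <;>
    cases arc (G.head c).1 (G.foot c).1 (G.head x).1 <;>
    cases arc (G.head c).1 (G.foot c).1 (G.foot x).1 <;> simp

lemma parity_flipSet (hG : G.Proper) (S : Finset (Fin G.n)) (c : Fin G.n) :
    (G.flipSet S).parity c = flipFactor S c * G.parity c := by
  simp only [parity, Finset.mul_sum]
  refine Finset.sum_congr rfl fun x _ => ?_
  rw [crosses_flipSet hG S c x]
  split_ifs with hcx
  · exact sign_mul_inter_flipSet hG S hcx
  · rw [mul_zero]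

lemma hasEnds_smooth_flipSet (hG : G.Proper) (S : Finset (Fin G.n)) (x : Fin G.n)
    (j : Fin (G.n - 1)) :
    let ρ : Fin (2 * (G.n - 1)) → Fin (2 * (G.n - 1)) := if x ∈ S then Fin.rev else id
    ((G.flipSet S).smooth x).flatten.hasEnds j (ρ ((G.smooth x).head j))
      (ρ ((G.smooth x).foot j)) := by
  have hk : skipAt x j ≠ x := skipAt_ne x j
  have hx := hG.head_val_ne_foot_val x x
  obtain ⟨hh, hf⟩ := hG.head_val_ne_of_ne hk
  obtain ⟨fh, ff⟩ := hG.foot_val_ne_of_ne hk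
  by_cases hkS : skipAt x j ∈ S <;> [refine .inr ⟨?_, ?_⟩; refine .inl ⟨?_, ?_⟩] <;>
    by_cases hxS : x ∈ S <;>
    simp only [flatten, smooth, flipSet, hxS, hkS, if_true, if_false, id, Fin.ext_iff,
      Fin.val_rev] <;>
    first
    | exact smoothPos_swap_mod (G.head x).2 (G.foot x).2 (G.head _).2 hx hh hf
    | exact smoothPos_swap_mod (G.head x).2 (G.foot x).2 (G.foot _).2 hx fh ff

lemma flatIso_smooth_flipSet (hG : G.Proper) (S : Finset (Fin G.n)) (x : Fin G.n) :
    FlatIso (G.smooth x).flatten ((G.flipSet S).smooth x).flatten := by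
  by_cases hxS : x ∈ S
  · refine ⟨id, Fin.rev, Function.bijective_id, Fin.rev_bijective, .inr antiCyclicMap_rev,
      fun j => ?_⟩
    have h := hasEnds_smooth_flipSet hG S x j
    simp only [hxS, if_true] at h
    exact h
  · refine ⟨id, id, Function.bijective_id, Function.bijective_id, .inl fun _ _ _ => rfl,
      fun j => ?_⟩
    have h := hasEnds_smooth_flipSet hG S x j
    simp only [hxS, if_false] at h
    exact h

lemma abs_parity_flipSet (hG : G.Proper) (S : Finset (Fin G.n)) (c : Fin G.n) :
    |(G.flipSet S).parity c| = |G.parity c| := by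
  rw [parity_flipSet hG S c, abs_mul, abs_flipFactor, one_mul]

end GaussDiagram

open GaussDiagram

lemma Sone_flipSet {G : GaussDiagram} (hG : G.Proper) (S : Finset (Fin G.n)) (i : ℤ) :
    Sone (G.flipSet S) i = ∑ x : Fin G.n, flipFactor S x •
      if |G.parity x| = i then Finsupp.single (Fclass (G.smooth x).flatten) (G.sign x) else 0 := by
  refine Finset.sum_congr rfl fun (x : Fin G.n) _ => ?_
  have hclass : Fclass ((G.flipSet S).smooth x).flatten = Fclass (G.smooth x).flatten :=
    (Quot.sound (.inl (flatIso_smooth_flipSet hG S x))).symm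
  rw [abs_parity_flipSet hG S x, hclass, flipSet_sign, smul_ite, smul_zero, Finsupp.smul_single,
    smul_eq_mul]

theorem Sone_degree_one_general (i : ℤ) (G : GaussDiagram) (hG : G.Proper)
    (a b : Fin G.n) (hab : a ≠ b) :
    Sone G i - Sone (G.flipSet {a}) i - Sone (G.flipSet {b}) i
      + Sone (G.flipSet {a, b}) i = 0 := by
  rw [Sone_flipSet hG, Sone_flipSet hG, Sone_flipSet hG, Sone, ← Finset.sum_sub_distrib,
    ← Finset.sum_sub_distrib, ← Finset.sum_add_distrib]
  refine Finset.sum_eq_zero fun x _ => ?_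
  generalize (if |G.parity x| = i then Finsupp.single (Fclass (G.smooth x).flatten) (G.sign x)
    else 0) = t
  linear_combination (norm := module) flipFactor_alternating_sum hab x • t

/-- `S_i` is a degree one Vassiliev invariant: for every Gauss diagram
`G` and distinct chords `a, b`, the alternating sum of `S_i` over the four resolutions
(flipping `a` and/or `b`, where flipping interchanges head and foot and negates the sign)
vanishes in the free ℤ-module on flat equivalence classes of flat Gauss diagrams. -/
theorem Sone_degree_one (i : ℤ) (hi : 1 ≤ i) (G : GaussDiagram) (hG : G.Proper)
    (a b : Fin G.n) (hab : a ≠ b) :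
    Sone G i - Sone (G.flipSet {a}) i - Sone (G.flipSet {b}) i
      + Sone (G.flipSet {a, b}) i = 0 :=
  Sone_degree_one_general i G hG a b hab
end

section
/- Let Z = (z_1, …, z_n) with 0 < z_1 < … < z_n. The invariant S_Z is a degree n Vassiliev invariant: for every Gauss diagram G, every m ≥ n + 1, and every choice of m distinct chords x_1, …, x_m of G, Σ_{ε ∈ {±1}^m} (ε_1 ε_2 ⋯ ε_m) · S_Z(G_{(ε, x̄)}) = 0 in the free ℤ-module on flat equivalence classes of flat Gauss diagrams, where G_{(ε, x̄)} is obtained from G by flipping (interchanging head and foot and negating the sign of) each chord x_i with ε_i = −1. -/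
/-!
A term of `S_Z` involves only the `n` chords of its tuple `t`. Flipping a chord `c` outside `t`
changes neither the signs of the `t j`, nor their parities (a chord crossing `t j` changes both
its sign and its intersection number with `t j`), nor the flat class of the smoothing along `t`
(flipping commutes with smoothing the other chords, and flat diagrams forget orientations).
Since `m > n`, for each `t` some `x i` lies outside `t`, and pairing `s` with `insert i s`
cancels the alternating sum term by term.
-/

namespace Finset

theorem sum_neg_one_pow_card_smul_eq_zero {α M : Type*} [Fintype α] [DecidableEq α]
    [AddCommGroup M] {f : Finset α → M} (i : α) (hf : ∀ s, i ∉ s → f (insert i s) = f s) :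
    ∑ s, (-1 : ℤ) ^ s.card • f s = 0 := by
  rw [← powerset_univ, ← insert_erase (mem_univ i), sum_powerset_insert (notMem_erase i _),
    ← sum_add_distrib]
  refine sum_eq_zero fun s hs => ?_
  have his : i ∉ s := fun h => notMem_erase i _ (mem_powerset.mp hs h)
  rw [hf s his, card_insert_of_notMem his, pow_succ, mul_neg_one, neg_smul, add_neg_cancel]

theorem sum_neg_one_pow_card_smul_sum_eq_zero {α β M : Type*} [Fintype α] [DecidableEq α]
    [Fintype β] [AddCommGroup M] (F : Finset α → β → M)
    (hF : ∀ b, ∃ i, ∀ s, i ∉ s → F (insert i s) b = F s b) :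
    ∑ s, (-1 : ℤ) ^ s.card • ∑ b, F s b = 0 := by
  simp only [smul_sum]
  rw [sum_comm]
  refine sum_eq_zero fun b _ => ?_
  obtain ⟨i, hi⟩ := hF b
  exact sum_neg_one_pow_card_smul_eq_zero i hi

end Finset

theorem exists_apply_notMem_range_of_card_lt {ι κ β : Type*} [Fintype ι] [Fintype κ]
    {x : ι → β} (hx : Function.Injective x) (t : κ → β)
    (h : Fintype.card κ < Fintype.card ι) : ∃ i, x i ∉ Set.range t := by
  classical
  have hcard : (Finset.univ.image t).card < (Finset.univ.image x).card := by
    rw [Finset.card_image_of_injective _ hx]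
    exact Finset.card_image_le.trans_lt h
  obtain ⟨_, hb, hbt⟩ := Finset.exists_mem_notMem_of_card_lt_card hcard
  obtain ⟨i, -, rfl⟩ := Finset.mem_image.mp hb
  exact ⟨i, fun ⟨j, hj⟩ => hbt (Finset.mem_image.mpr ⟨j, Finset.mem_univ j, hj⟩)⟩

theorem skipAt_injective {n : ℕ} (x : Fin n) : Function.Injective (skipAt x) := by
  intro a b hab
  unfold skipAt at hab
  apply Fin.ext
  split_ifs at hab <;> simp only [Fin.mk.injEq] at hab <;> omega

theorem skipAt_eq_of_unskip?_eq_some {n : ℕ} {x b : Fin n} {b' : Fin (n - 1)}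
    (h : unskip? x b = some b') : skipAt x b' = b := by
  unfold unskip? at h
  unfold skipAt
  split_ifs at h with h₁ <;> cases h
  · rw [dif_pos h₁]
  · rw [dif_neg (by simp only [not_lt]; omega)]
    exact Fin.ext (by simp only; omega)

namespace GaussDiagram

theorem ext_of_val {G H : GaussDiagram} (hn : G.n = H.n)
    (hhead : ∀ (i : Fin G.n) (j : Fin H.n), (i : ℕ) = j → (G.head i : ℕ) = H.head j)
    (hfoot : ∀ (i : Fin G.n) (j : Fin H.n), (i : ℕ) = j → (G.foot i : ℕ) = H.foot j)
    (hsign : ∀ (i : Fin G.n) (j : Fin H.n), (i : ℕ) = j → G.sign i = H.sign j) : G = H := by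
  obtain ⟨n, head, foot, sign⟩ := G
  obtain ⟨_, head', foot', sign'⟩ := H
  dsimp only at hn hhead hfoot hsign
  subst hn
  simp only [mk.injEq, heq_eq_eq, true_and]
  exact ⟨funext fun i => Fin.ext (hhead i i rfl), funext fun i => Fin.ext (hfoot i i rfl),
    funext fun i => hsign i i rfl⟩

section flipSet

variable (G : GaussDiagram) (S : Finset (Fin G.n)) (i : Fin G.n)

@[simp] theorem head_flipSet : (G.flipSet S).head i = if i ∈ S then G.foot i else G.head i := rfl

@[simp] theorem foot_flipSet : (G.flipSet S).foot i = if i ∈ S then G.head i else G.foot i := rfl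

@[simp] theorem sign_flipSet : (G.flipSet S).sign i = if i ∈ S then -G.sign i else G.sign i := rfl

variable {G S}

theorem flipSet_insert {c : Fin G.n} (hc : c ∉ S) :
    G.flipSet (insert c S) = (G.flipSet S).flipSet {c} := by
  -- typing `{c}` over `Fin G.n` rather than `Fin (G.flipSet S).n` lets `simp` see through it
  show G.flipSet (insert c S) = (G.flipSet S).flipSet ({c} : Finset (Fin G.n))
  refine ext_of_val rfl ?_ ?_ ?_ <;> intro (i : Fin G.n) (j : Fin G.n) hij <;>
    obtain rfl := Fin.ext hij <;>
    simp only [flipSet, Finset.mem_insert, Finset.mem_singleton] <;>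
    by_cases hi : i = c <;> simp_all

theorem crosses_flipSet_of_notMem {c : Fin G.n} (hc : c ∉ S) (y : Fin G.n) :
    (G.flipSet S).crosses c y = G.crosses c y := by
  simp only [crosses, head_flipSet, foot_flipSet, if_neg hc]
  by_cases hy : y ∈ S
  · simp only [if_pos hy, bne_comm (a := arc _ _ (G.foot y))]
    rfl
  · simp only [if_neg hy]
    rfl

theorem parity_flipSet_of_notMem {c : Fin G.n} (hc : c ∉ S) :
    (G.flipSet S).parity c = G.parity c := by
  refine Finset.sum_congr rfl fun (y : Fin G.n) _ => ?_
  rw [crosses_flipSet_of_notMem hc]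
  split_ifs with hcy
  · simp only [inter, sign_flipSet, head_flipSet, foot_flipSet, if_neg hc]
    by_cases hy : y ∈ S
    · -- `y` crosses `c`, so its head and foot lie on opposite arcs of `c`:
      -- flipping `y` negates both its sign and `int_c(y)`
      simp only [crosses, Bool.and_eq_true, bne_iff_ne, ne_eq] at hcy
      simp only [if_pos hy]
      cases h : arc (G.head c) (G.foot c) (G.head y) <;> simp_all
    · simp only [if_neg hy]
  · rfl

theorem smooth_flipSet {x : Fin G.n} (hx : x ∉ S) {T : Finset (Fin (G.smooth x).n)}
    (hT : ∀ i, i ∈ T ↔ skipAt x i ∈ S) : (G.flipSet S).smooth x = (G.smooth x).flipSet T := by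
  simp only [flipSet, hT]
  simp only [smooth, if_neg hx, mk.injEq, heq_eq_eq, true_and, and_true]
  constructor <;> funext i <;> split_ifs <;> rfl

end flipSet

theorem smoothList_congr {A B : GaussDiagram} (h : A = B) {L : List (Fin A.n)}
    {L' : List (Fin B.n)} (hL : HEq L L') : A.smoothList L = B.smoothList L' := by
  subst h
  rw [eq_of_heq hL]

theorem fclass_flatten_flipSet (G : GaussDiagram) (S : Finset (Fin G.n)) :
    Fclass (G.flipSet S).flatten = Fclass G.flatten := by
  refine Quot.sound (Or.inl ⟨id, id, Function.bijective_id, Function.bijective_id,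
    Or.inl fun _ _ _ => rfl, fun i => ?_⟩)
  by_cases hi : i ∈ S
  · exact Or.inr ⟨(if_pos hi).symm, (if_pos hi).symm⟩
  · exact Or.inl ⟨(if_neg hi).symm, (if_neg hi).symm⟩

theorem fclass_flatten_smoothList_flipSet :
    ∀ (G : GaussDiagram) (S : Finset (Fin G.n)) (L : List (Fin G.n)), (∀ a ∈ L, a ∉ S) →
      Fclass ((G.flipSet S).smoothList L).flatten = Fclass (G.smoothList L).flatten
  | G, S, [], _ => by
    erw [smoothList.eq_1 (G.flipSet S), smoothList.eq_1, fclass_flatten_flipSet]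
  | G, S, a :: xs, hL => by
    have ha : a ∉ S := hL a List.mem_cons_self
    erw [smoothList.eq_2 (G.flipSet S), smoothList.eq_2]
    rw [smoothList_congr (smooth_flipSet (T := S.preimage (skipAt a) (skipAt_injective a).injOn)
      ha fun _ => Finset.mem_preimage) HEq.rfl]
    refine fclass_flatten_smoothList_flipSet _ _ _ fun b' hb' hb'S => ?_
    obtain ⟨b, hb, hbb'⟩ := List.mem_filterMap.mp hb'
    exact hL b (List.mem_cons_of_mem a hb)
      (skipAt_eq_of_unskip?_eq_some hbb' ▸ Finset.mem_preimage.mp hb'S)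
termination_by _ _ L => L.length
decreasing_by exact Nat.lt_succ_of_le (List.length_filterMap_le _ _)

end GaussDiagram

noncomputable def SZTerm (G : GaussDiagram) {k : ℕ} (Z : Fin k → ℤ) (t : Fin k → Fin G.n) :
    FlatClass →₀ ℤ :=
  if ∀ j, |G.parity (t j)| = Z j then
    Finsupp.single (Fclass (G.smoothList (List.ofFn t)).flatten) (∏ j, G.sign (t j))
  else 0

namespace GaussDiagram

variable {G : GaussDiagram} {k : ℕ} (Z : Fin k → ℤ)

theorem SZ_flipSet_eq_sum (S : Finset (Fin G.n)) :
    SZ (G.flipSet S) Z = ∑ t : Fin k → Fin G.n, SZTerm (G.flipSet S) Z t := rfl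

theorem SZTerm_congr {H : GaussDiagram} (h : G = H) {t : Fin k → Fin G.n}
    {t' : Fin k → Fin H.n} (ht : HEq t t') : SZTerm G Z t = SZTerm H Z t' := by
  subst h
  rw [eq_of_heq ht]

theorem SZTerm_flipSet {S : Finset (Fin G.n)} {t : Fin k → Fin G.n} (ht : ∀ j, t j ∉ S) :
    SZTerm (G.flipSet S) Z t = SZTerm G Z t := by
  have hL : ∀ a ∈ List.ofFn t, a ∉ S := by
    simpa only [List.forall_mem_ofFn_iff] using ht
  simp only [SZTerm, parity_flipSet_of_notMem (ht _), sign_flipSet, if_neg (ht _)]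
  erw [fclass_flatten_smoothList_flipSet G S _ hL]

theorem SZTerm_flipSet_insert {S : Finset (Fin G.n)} {c : Fin G.n} (hcS : c ∉ S)
    {t : Fin k → Fin G.n} (hct : c ∉ Set.range t) :
    SZTerm (G.flipSet (insert c S)) Z t = SZTerm (G.flipSet S) Z t :=
  (SZTerm_congr Z (flipSet_insert hcS) HEq.rfl).trans
    (SZTerm_flipSet Z fun j hj => hct ⟨j, Finset.mem_singleton.mp hj⟩)

end GaussDiagram

theorem SZ_vassiliev_general {n : ℕ} (Z : Fin n → ℤ)
    (G : GaussDiagram) (m : ℕ) (hm : n + 1 ≤ m)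
    (x : Fin m → Fin G.n) (hx : Function.Injective x) :
    ∑ s : Finset (Fin m), (-1 : ℤ) ^ s.card • SZ (G.flipSet (s.image x)) Z = 0 := by
  simp only [GaussDiagram.SZ_flipSet_eq_sum]
  refine Finset.sum_neg_one_pow_card_smul_sum_eq_zero
    (fun s (t : Fin n → Fin G.n) => SZTerm (G.flipSet (s.image x)) Z t) fun t => ?_
  obtain ⟨i, hi⟩ := exists_apply_notMem_range_of_card_lt hx t (by simpa using hm)
  refine ⟨i, fun s his => ?_⟩
  rw [Finset.image_insert]
  exact GaussDiagram.SZTerm_flipSet_insert Z (by rwa [hx.mem_finset_image]) hi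

/-- `S_Z` is a degree `n` Vassiliev invariant: for every Gauss diagram
`G`, every `m ≥ n + 1` and every choice of `m` distinct chords `x₁, …, x_m` of `G`, the
alternating sum of `S_Z` over all `2^m` resolutions (each resolution flipping the chords
`x_j` with index in the flipping set `s`) vanishes in the free ℤ-module on flat
equivalence classes of flat Gauss diagrams. -/
theorem SZ_vassiliev {n : ℕ} (Z : Fin n → ℤ) (hpos : ∀ j, 0 < Z j) (hmono : StrictMono Z)
    (G : GaussDiagram) (hG : G.Proper) (m : ℕ) (hm : n + 1 ≤ m)
    (x : Fin m → Fin G.n) (hx : Function.Injective x) :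
    ∑ s : Finset (Fin m), (-1 : ℤ) ^ s.card • SZ (G.flipSet (s.image x)) Z = 0 :=
  SZ_vassiliev_general Z G m hm x hx
end
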